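/- arXiv:2404.17711 — 5 statements merged into one kernel-verified Lean document; each statement's English description precedes it below -/
import Mathlib

section
/- Let x > 0, y ≥ 0 with (x−1)² + y² ≤ 1, and let d = (x²+y²)/(2x). Then d ≤ 1, and for all t with 0 ≤ t ≤ 1, √((x−d)²+y²) + d + 1 − 2t ≤ √((x−1)²+y²) + 2 − 2t. -/
/-! With `d = (x² + y²) / (2x)` the point `z = x + iy` lies on the circle of radius `d` about `d`,
which passes through `0`. The disk hypothesis `|z - 1| ≤ 1` says `d ≤ 1`, and the triangle
inequality through `1` gives `d = |z - d| ≤ |z - 1| + (1 - d)`, which is the claimed comparison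
once `√((x - d)² + y²)` is replaced by `d`. -/

open Complex

theorem Complex.dist_mk_ofReal (x y a : ℝ) :
    dist (⟨x, y⟩ : ℂ) a = √((x - a) ^ 2 + y ^ 2) := by
  rw [dist_eq, norm_def, normSq_apply]
  congr 1
  simp only [sub_re, sub_im, ofReal_re, ofReal_im, sub_zero]
  ring

theorem sqrt_sub_sq_add_sq_eq_of_two_mul_eq {x y d : ℝ} (hd₀ : 0 ≤ d)
    (hd : 2 * x * d = x ^ 2 + y ^ 2) :
    √((x - d) ^ 2 + y ^ 2) = d := by
  rw [show (x - d) ^ 2 + y ^ 2 = d ^ 2 by linear_combination -hd, Real.sqrt_sq hd₀]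

theorem two_mul_sub_one_le_sqrt {x y d : ℝ} (hd₁ : d ≤ 1) (hr : √((x - d) ^ 2 + y ^ 2) = d) :
    2 * d - 1 ≤ √((x - 1) ^ 2 + y ^ 2) := by
  have htri := dist_triangle (⟨x, y⟩ : ℂ) (1 : ℝ) (d : ℝ)
  rw [dist_mk_ofReal, dist_mk_ofReal, hr, isometry_ofReal.dist_eq, Real.dist_eq,
    abs_of_nonneg (sub_nonneg.2 hd₁)] at htri
  linarith

theorem stmt_2_general (x y : ℝ) (hx : 0 < x)
    (hD : (x - 1)^2 + y^2 ≤ 1) :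
    (x^2 + y^2) / (2*x) ≤ 1 ∧
    ∀ t : ℝ, 0 ≤ t → t ≤ 1 →
      Real.sqrt ((x - (x^2 + y^2) / (2*x))^2 + y^2) + (x^2 + y^2) / (2*x) + 1 - 2*t ≤
      Real.sqrt ((x - 1)^2 + y^2) + 2 - 2*t := by
  set d : ℝ := (x^2 + y^2) / (2*x) with hd_def
  have hd : 2 * x * d = x ^ 2 + y ^ 2 := by
    rw [hd_def]
    field_simp
  have hd₁ : d ≤ 1 := by
    rw [div_le_one (by positivity)]
    linarith
  refine ⟨hd₁, fun t _ _ => ?_⟩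
  have hr := sqrt_sub_sq_add_sq_eq_of_two_mul_eq (by positivity) hd
  have := two_mul_sub_one_le_sqrt hd₁ hr
  rw [hr]
  linarith

theorem stmt_2 (x y : ℝ) (hx : 0 < x) (hy : 0 ≤ y)
    (hD : (x - 1)^2 + y^2 ≤ 1) :
    (x^2 + y^2) / (2*x) ≤ 1 ∧
    ∀ t : ℝ, 0 ≤ t → t ≤ 1 →
      Real.sqrt ((x - (x^2 + y^2) / (2*x))^2 + y^2) + (x^2 + y^2) / (2*x) + 1 - 2*t ≤
      Real.sqrt ((x - 1)^2 + y^2) + 2 - 2*t :=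
  stmt_2_general x y hx hD
end

section
/- For real x, y with y ≥ 0, sup over t ∈ [0,1] of (1+√(x²+y²)) / max{1, √((x−t)²+y²)+1−t} equals (1+√(x²+y²)) / max{1, √((x−1)²+y²)}. -/
/-!
The supremum is attained at `t = 1`: by the triangle inequality, the distance from `(x, y)` to
`(1, 0)` is at most its distance to `(t, 0)` plus `1 - t`, so no denominator is smaller than the one at `t = 1`.
-/

theorem Real.sqrt_add_sq_add_sq_le (a b c : ℝ) :
    √((a + c) ^ 2 + b ^ 2) ≤ √(a ^ 2 + b ^ 2) + |c| := by
  have ha : |a| ≤ √(a ^ 2 + b ^ 2) := by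
    rw [← Real.sqrt_sq_eq_abs]
    exact Real.sqrt_le_sqrt (by nlinarith)
  have hcross : a * c ≤ √(a ^ 2 + b ^ 2) * |c| :=
    calc a * c ≤ |a| * |c| := by rw [← abs_mul]; exact le_abs_self _
      _ ≤ √(a ^ 2 + b ^ 2) * |c| := by gcongr
  rw [Real.sqrt_le_iff]
  refine ⟨by positivity, ?_⟩
  nlinarith [Real.sq_sqrt (by positivity : (0 : ℝ) ≤ a ^ 2 + b ^ 2), sq_abs c]

theorem stmt_5_general (x y : ℝ) :
    sSup ((fun t : ℝ =>
        (1 + Real.sqrt (x^2 + y^2)) / max 1 (Real.sqrt ((x - t)^2 + y^2) + 1 - t)) ''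
      Set.Icc (0:ℝ) 1) =
    (1 + Real.sqrt (x^2 + y^2)) / max 1 (Real.sqrt ((x - 1)^2 + y^2)) := by
  refine IsGreatest.csSup_eq ⟨⟨1, ⟨zero_le_one, le_rfl⟩, by simp⟩, ?_⟩
  rintro _ ⟨t, ⟨-, ht1⟩, rfl⟩
  have hdist := Real.sqrt_add_sq_add_sq_le (x - t) y (t - 1)
  rw [sub_add_sub_cancel, abs_of_nonpos (sub_nonpos.mpr ht1)] at hdist
  refine div_le_div_of_nonneg_left (by positivity) (lt_max_of_lt_left one_pos) ?_
  exact max_le_max le_rfl (by linarith)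

theorem stmt_5 (x y : ℝ) (hy : 0 ≤ y) :
    sSup ((fun t : ℝ =>
        (1 + Real.sqrt (x^2 + y^2)) / max 1 (Real.sqrt ((x - t)^2 + y^2) + 1 - t)) ''
      Set.Icc (0:ℝ) 1) =
    (1 + Real.sqrt (x^2 + y^2)) / max 1 (Real.sqrt ((x - 1)^2 + y^2)) :=
  stmt_5_general x y
end

section
/- Let x, y > 0 and set t' = (x(x−1)+y²)/(2(x+√x)). Then √((x−t')²+y²) + 3 − t' = 3 + √x, i.e., √((x−t')²+y²) = √x + t'. -/
/-! Squaring `(x - t)² + y² = (√x + t)²` cancels `t²` and leaves the linear equation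
`x (x - 1) + y² = 2 t (x + √x)`, whose solution is `t'`. The right-hand side `√x + t'` equals
`((x + √x)² + y²) / (2 (x + √x)) ≥ 0`, so the square root can be taken. -/

section

variable {x y s : ℝ}

lemma add_div_eq_sq_add_sq_div (hs : s ^ 2 = x) (h : x + s ≠ 0) :
    s + (x*(x-1) + y^2) / (2*(x + s)) = ((x + s)^2 + y^2) / (2*(x + s)) := by
  field_simp
  linear_combination hs

lemma sub_div_sq_add_sq_eq_sq (hs : s ^ 2 = x) (h : x + s ≠ 0) :
    (x - (x*(x-1) + y^2) / (2*(x + s)))^2 + y^2 = (s + (x*(x-1) + y^2) / (2*(x + s)))^2 := by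
  field_simp
  linear_combination (-(4 : ℝ) * (x + s) ^ 2) * hs

lemma sqrt_sub_div_sq_add_sq_eq (hs : s ^ 2 = x) (h : 0 < x + s) :
    √((x - (x*(x-1) + y^2) / (2*(x + s)))^2 + y^2) = s + (x*(x-1) + y^2) / (2*(x + s)) := by
  have hnonneg : 0 ≤ s + (x*(x-1) + y^2) / (2*(x + s)) := by
    rw [add_div_eq_sq_add_sq_div hs h.ne']
    positivity
  rw [sub_div_sq_add_sq_eq_sq hs h.ne', Real.sqrt_sq hnonneg]

end

theorem stmt_10_general (x y : ℝ) (hx : 0 < x) :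
    Real.sqrt ((x - (x*(x-1) + y^2) / (2*(x + Real.sqrt x)))^2 + y^2)
      + 3 - (x*(x-1) + y^2) / (2*(x + Real.sqrt x)) = 3 + Real.sqrt x ∧
    Real.sqrt ((x - (x*(x-1) + y^2) / (2*(x + Real.sqrt x)))^2 + y^2) =
      Real.sqrt x + (x*(x-1) + y^2) / (2*(x + Real.sqrt x)) := by
  have key := sqrt_sub_div_sq_add_sq_eq (y := y) (Real.sq_sqrt hx.le)
    (add_pos hx (Real.sqrt_pos.mpr hx))
  exact ⟨by rw [key]; ring, key⟩

theorem stmt_10 (x y : ℝ) (hx : 0 < x) (hy : 0 < y) :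
    Real.sqrt ((x - (x*(x-1) + y^2) / (2*(x + Real.sqrt x)))^2 + y^2)
      + 3 - (x*(x-1) + y^2) / (2*(x + Real.sqrt x)) = 3 + Real.sqrt x ∧
    Real.sqrt ((x - (x*(x-1) + y^2) / (2*(x + Real.sqrt x)))^2 + y^2) =
      Real.sqrt x + (x*(x-1) + y^2) / (2*(x + Real.sqrt x)) :=
  stmt_10_general x y hx
end

section
/- Let x, y > 0 with (x−1)² + y² ≤ 1 and x² + y² > x. Then (3+√x)/(√(x²+y²)+1) ≥ 1 + y²/(x(√x+1)²). -/
/-!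
The disk condition says `x² + y² ≤ 2x`, so `y² ≤ x (2 - x)` and `√(x² + y²) ≤ √2 · √x ≤ 3/2 · √x`.
Using both bounds the inequality reduces, with `s = √x`, to
`(2s + 3)(3s + 2) ≤ 2(s + 3)(s + 1)²`, whose difference is `s(2s² + 4s + 1) ≥ 0`.
-/

lemma one_add_two_sub_sq_div_le {s : ℝ} (hs : 0 ≤ s) :
    1 + (2 - s ^ 2) / (s + 1) ^ 2 ≤ (3 + s) / (3 / 2 * s + 1) := by
  rw [one_add_div (by positivity), div_le_div_iff₀ (by positivity) (by positivity)]
  nlinarith [pow_nonneg hs 3, sq_nonneg s]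

theorem stmt_12_general (x y : ℝ)
    (hD : (x - 1)^2 + y^2 ≤ 1) :
    1 + y^2 / (x * (Real.sqrt x + 1)^2) ≤
      (3 + Real.sqrt x) / (Real.sqrt (x^2 + y^2) + 1) := by
  have hx0 : 0 ≤ x := by nlinarith [sq_nonneg y]
  have hx2 : x ≤ 2 := by nlinarith [sq_nonneg y]
  have hy2 : y ^ 2 ≤ (2 - x) * x := by linarith
  have hr : Real.sqrt (x ^ 2 + y ^ 2) ≤ 3 / 2 * Real.sqrt x := by
    rw [Real.sqrt_le_iff, mul_pow, Real.sq_sqrt hx0]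
    exact ⟨by positivity, by linarith⟩
  calc 1 + y ^ 2 / (x * (Real.sqrt x + 1) ^ 2)
      = 1 + y ^ 2 / x / (Real.sqrt x + 1) ^ 2 := by rw [div_div]
    _ ≤ 1 + (2 - Real.sqrt x ^ 2) / (Real.sqrt x + 1) ^ 2 := by
      rw [Real.sq_sqrt hx0]
      gcongr
      exact div_le_of_le_mul₀ hx0 (by linarith) hy2
    _ ≤ (3 + Real.sqrt x) / (3 / 2 * Real.sqrt x + 1) :=
      one_add_two_sub_sq_div_le (Real.sqrt_nonneg x)
    _ ≤ (3 + Real.sqrt x) / (Real.sqrt (x ^ 2 + y ^ 2) + 1) := by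
      gcongr

theorem stmt_12 (x y : ℝ) (hx : 0 < x) (hy : 0 < y)
    (hD : (x - 1)^2 + y^2 ≤ 1) (hout : x < x^2 + y^2) :
    1 + y^2 / (x * (Real.sqrt x + 1)^2) ≤
      (3 + Real.sqrt x) / (Real.sqrt (x^2 + y^2) + 1) :=
  stmt_12_general x y hD
end

section
/- Let x, y ≥ 0 with (x−1)² + y² ≥ 1. Then for all t ∈ [0,1], (√((x−1)²+y²) + 2(1−t)) / (√((x−t)²+y²) + 1 − t) ≤ 3. -/
/-!
Writing `a` for the distance from `(x, y)` to `(t, 0)` and `b` for the distance to `(1, 0)`,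
the triangle inequality gives `b ≤ a + (1 - t)`, hence `b + 2 (1 - t) ≤ 3 (a + (1 - t))`.
The denominator is positive because it dominates `b ≥ 1`.
-/

/-- The triangle inequality in the plane for the points `(u, y)`, `(0, 0)` and `(s, 0)`. -/
theorem Real.sqrt_sub_sq_add_sq_le (u y : ℝ) {s : ℝ} (hs : 0 ≤ s) :
    Real.sqrt ((u - s) ^ 2 + y ^ 2) ≤ Real.sqrt (u ^ 2 + y ^ 2) + s := by
  have hu : -u ≤ Real.sqrt (u ^ 2 + y ^ 2) :=
    (neg_le_abs u).trans (Real.abs_le_sqrt (le_add_of_nonneg_right (sq_nonneg y)))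
  rw [Real.sqrt_le_left (by positivity), add_sq, Real.sq_sqrt (by positivity)]
  nlinarith

theorem add_two_mul_div_le_three {a b s : ℝ} (ha : 0 ≤ a) (hb : 0 < b) (hba : b ≤ a + s) :
    (b + 2 * s) / (a + s) ≤ 3 := by
  rw [div_le_iff₀ (hb.trans_le hba)]
  linarith

theorem stmt_17_general (x y : ℝ) (hD : 1 ≤ (x - 1)^2 + y^2) :
    ∀ t : ℝ, 0 ≤ t → t ≤ 1 →
      (Real.sqrt ((x - 1)^2 + y^2) + 2*(1 - t)) /
        (Real.sqrt ((x - t)^2 + y^2) + 1 - t) ≤ 3 := by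
  intro t _ ht1
  have htri : Real.sqrt ((x - 1) ^ 2 + y ^ 2) ≤ Real.sqrt ((x - t) ^ 2 + y ^ 2) + (1 - t) := by
    simpa using Real.sqrt_sub_sq_add_sq_le (x - t) y (sub_nonneg.mpr ht1)
  rw [add_sub_assoc]
  exact add_two_mul_div_le_three (Real.sqrt_nonneg _) (Real.sqrt_pos.mpr (by linarith)) htri

theorem stmt_17 (x y : ℝ) (hy : 0 ≤ y) (hD : 1 ≤ (x - 1)^2 + y^2) :
    ∀ t : ℝ, 0 ≤ t → t ≤ 1 →
      (Real.sqrt ((x - 1)^2 + y^2) + 2*(1 - t)) /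
        (Real.sqrt ((x - t)^2 + y^2) + 1 - t) ≤ 3 :=
  stmt_17_general x y hD
end
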